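/- The set of Misiurewicz combinatorics Cb_mis — tuples Θ = (θ_1,…,θ_{d−1}) ∈ Cb such that every angle α ∈ ∪θ_i is strictly preperiodic under multiplication by d on ℝ/ℤ — is dense in Cb. -/

import Mathlib

/-- The circle `ℝ/ℤ`. -/
abbrev Circle1 := AddCircle (1 : ℝ)

/-- `B` is unlinked from `A`: `B` is contained in a single connected component of the
complement of `A`. -/
def UnlinkedIn (A B : Set Circle1) : Prop :=
  ∃ x ∈ B, B ⊆ connectedComponentIn Aᶜ x

/-- Ambient space for critical portraits: `(d−1)`-tuples of subsets of `ℝ/ℤ`. -/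
def CbAmb (d : ℕ) := Fin (d - 1) → Set Circle1

/-- The topology on tuples of subsets of the circle generated by the sets
`U(O) = {θ : ∀ i, θ_i ⊆ O_i}` for tuples of open sets `O_i ⊆ ℝ/ℤ`. -/
instance (d : ℕ) : TopologicalSpace (CbAmb d) :=
  TopologicalSpace.generateFrom
    {V | ∃ O : Fin (d - 1) → Set Circle1, (∀ i, IsOpen (O i)) ∧
      V = {θ : CbAmb d | ∀ i, θ i ⊆ O i}}

/-- The combinatorial space `Cb` of critical portraits. -/
def CbSet (d : ℕ) : Set (CbAmb d) :=
  {θ | (∀ i, (θ i).Nonempty) ∧ (∀ i, (θ i).Finite) ∧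
    (∀ i, ∀ x ∈ θ i, ∀ y ∈ θ i, d • x = d • y) ∧
    (∀ i j, θ i = θ j ∨ Disjoint (θ i) (θ j)) ∧
    (⋃ i, θ i).ncard = d + {A : Set Circle1 | ∃ i, A = θ i}.ncard - 1 ∧
    (∀ i j, Disjoint (θ i) (θ j) → UnlinkedIn (θ i) (θ j))}

/-- `α ∈ ℝ/ℤ` is strictly preperiodic under multiplication by `d`: its orbit is finite
(it is preperiodic) but `α` itself is not periodic. -/
def StrictlyPreperiodic (d : ℕ) (α : Circle1) : Prop :=
  (∃ m l : ℕ, 1 ≤ l ∧ (d ^ (m + l)) • α = (d ^ m) • α) ∧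
  ∀ l : ℕ, 1 ≤ l → (d ^ l) • α ≠ α

/-- The set of Misiurewicz-type combinatorics: portraits all of whose angles are strictly
preperiodic under multiplication by `d`. -/
def CbMis (d : ℕ) : Set (CbAmb d) :=
  {θ | θ ∈ CbSet d ∧ ∀ i, ∀ α ∈ θ i, StrictlyPreperiodic d α}

/-!
Rotate every class of a portrait `θ ∈ Cb` by a small angle depending only on the critical value
`d • x` of its points. If `β` is close to a point `x` of the class, `d • β ≠ 0` and `β` has order a
power of `d`, then rotating by `β - x` sends every `y` with `d • y = d • x` to an angle whose image
under `×d` is `d • β`: a nonzero angle of `d`-power order, hence strictly preperiodic. Such `β` are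
dense, being the `d`-power torsion of `ℝ/ℤ` minus its finite `d`-torsion. Small rotations keep the
portrait in `Cb`: they are injective on the finite set of angles, so both cardinalities survive,
and a finite set staying inside one complementary component of another is an open condition.
-/

open Set Filter Topology Metric TopologicalSpace

instance : LocallyPathConnectedSpace Circle1 :=
  inferInstanceAs (LocallyPathConnectedSpace (Quotient _))

instance : Nontrivial Circle1 :=
  ⟨⟨((1 / 2 : ℝ) : Circle1), 0, ne_of_apply_ne norm (by rw [AddCircle.norm_half_period_eq]; norm_num)⟩⟩

theorem CbAmb.isTopologicalBasis (d : ℕ) :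
    IsTopologicalBasis {V : Set (CbAmb d) | ∃ O : Fin (d - 1) → Set Circle1,
      (∀ i, IsOpen (O i)) ∧ V = {θ | ∀ i, θ i ⊆ O i}} where
  exists_subset_inter := by
    rintro _ ⟨O, hO, rfl⟩ _ ⟨P, hP, rfl⟩ θ hθ
    exact ⟨_, ⟨fun i => O i ∩ P i, fun i => (hO i).inter (hP i), rfl⟩,
      fun i => subset_inter (hθ.1 i) (hθ.2 i),
      fun θ' h => ⟨fun i => (h i).trans inter_subset_left, fun i => (h i).trans inter_subset_right⟩⟩
  sUnion_eq := sUnion_eq_univ_iff.2 fun θ =>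
    ⟨univ, ⟨fun _ => univ, fun _ => isOpen_univ, by simp⟩, mem_univ θ⟩
  eq_generateFrom := rfl

theorem strictlyPreperiodic_of_pow_nsmul_eq_zero {d k : ℕ} {α : Circle1} (hα : α ≠ 0)
    (hk : d ^ k • α = 0) : StrictlyPreperiodic d α := by
  refine ⟨⟨k, 1, le_rfl, by rw [pow_add, mul_nsmul, hk, nsmul_zero]⟩, fun l hl hper => hα ?_⟩
  have hiter : ∀ n, d ^ (l * n) • α = α := fun n => by
    induction n with
    | zero => simp
    | succ n ih => rw [mul_add, mul_one, pow_add, mul_nsmul, ih, hper]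
  obtain ⟨m, hm⟩ : ∃ m, l * k = k + m :=
    ⟨l * k - k, (Nat.add_sub_cancel' (Nat.le_mul_of_pos_left k hl)).symm⟩
  rw [← hiter k, hm, pow_add, mul_nsmul, hk, nsmul_zero]

theorem dense_setOf_exists_pow_nsmul_eq_zero {d : ℕ} (hd : 1 < d) :
    Dense {β : Circle1 | ∃ n, d ^ n • β = 0} := by
  refine Metric.dense_iff.2 fun x r hr => ?_
  obtain ⟨y, rfl⟩ := QuotientAddGroup.mk_surjective x
  have hd' : (1 : ℝ) < d := Nat.one_lt_cast.2 hd
  obtain ⟨n, hn⟩ := exists_pow_lt_of_lt_one hr (inv_lt_one_of_one_lt₀ hd')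
  have hpos : (0 : ℝ) < d ^ n := by positivity
  refine ⟨((⌊y * d ^ n⌋ / d ^ n : ℝ) : Circle1), ?_, n, ?_⟩
  · rw [mem_ball, dist_eq_norm, ← AddCircle.coe_sub]
    calc ‖((⌊y * d ^ n⌋ / d ^ n - y : ℝ) : Circle1)‖ ≤ ‖(⌊y * d ^ n⌋ / d ^ n - y : ℝ)‖ :=
          QuotientAddGroup.norm_mk_le_norm
      _ = Int.fract (y * d ^ n) / d ^ n := by
          have hfract : y - ⌊y * d ^ n⌋ / d ^ n = Int.fract (y * d ^ n) / d ^ n := by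
            rw [Int.fract]
            field_simp
          rw [Real.norm_eq_abs, abs_sub_comm, hfract,
            abs_of_nonneg (div_nonneg (Int.fract_nonneg _) hpos.le)]
      _ < 1 / d ^ n := div_lt_div_of_pos_right (Int.fract_lt_one _) hpos
      _ = (d : ℝ)⁻¹ ^ n := by rw [one_div, inv_pow]
      _ < r := hn
  · rw [← AddCircle.coe_nsmul, nsmul_eq_mul, Nat.cast_pow, mul_div_cancel₀ _ hpos.ne']
    simp

theorem exists_norm_lt_forall_strictlyPreperiodic {d : ℕ} (hd : 1 < d) (c : Circle1) {ε : ℝ}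
    (hε : 0 < ε) : ∃ t : Circle1, ‖t‖ < ε ∧ ∀ y, d • y = c → StrictlyPreperiodic d (y + t) := by
  obtain ⟨x, rfl⟩ : ∃ x : Circle1, d • x = c := by
    obtain ⟨r, rfl⟩ := QuotientAddGroup.mk_surjective c
    refine ⟨((r / d : ℝ) : Circle1), ?_⟩
    rw [← AddCircle.coe_nsmul, nsmul_eq_mul, mul_div_cancel₀ _ (by positivity)]
  have hdense := (dense_setOf_exists_pow_nsmul_eq_zero hd).sdiff_finite
    (AddCircle.finite_torsion (1 : ℝ) (n := d) (by omega))
  obtain ⟨β, hβx, ⟨n, hβn⟩, hβd⟩ := Metric.dense_iff.1 hdense x ε hε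
  refine ⟨β - x, by rwa [← dist_eq_norm], fun y hy => ?_⟩
  have hdy : d • (y + (β - x)) = d • β := by rw [smul_add, smul_sub, hy, add_sub_cancel]
  refine strictlyPreperiodic_of_pow_nsmul_eq_zero (k := n + 1)
    (fun h => hβd (show d • β = 0 by rw [← hdy, h, smul_zero])) ?_
  rw [pow_succ', mul_nsmul, hdy, ← mul_nsmul, mul_comm, mul_nsmul, hβn, nsmul_zero]

theorem Set.Finite.eventually_forall_injOn {X : Type*} [MetricSpace X] {S : Set X}
    (hS : S.Finite) :
    ∀ᶠ ε in 𝓝[>] (0 : ℝ), ∀ f : X → X, (∀ x ∈ S, dist (f x) x < ε) → InjOn f S := by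
  have hsep : ∀ᶠ ε in 𝓝[>] (0 : ℝ), ∀ x ∈ S, ∀ y ∈ S, x ≠ y → 2 * ε < dist x y := by
    simp only [hS.eventually_all, eventually_imp_distrib_left]
    intro x _ y _ hxy
    filter_upwards [Ioo_mem_nhdsGT (half_pos (dist_pos.2 hxy))] with ε hε
    linarith [hε.2]
  filter_upwards [hsep] with ε hε f hf x hx y hy hfxy
  by_contra hxy
  have htriangle : dist x y ≤ dist (f x) x + dist (f y) y := by
    rw [dist_comm (f x), ← hfxy]
    exact dist_triangle x (f x) y
  linarith [hε x hx y hy hxy, hf x hx, hf y hy]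

theorem IsCompact.eventually_forall_image_subset {X : Type*} [PseudoMetricSpace X] {K U : Set X}
    (hK : IsCompact K) (hU : IsOpen U) (hKU : K ⊆ U) :
    ∀ᶠ ε in 𝓝[>] (0 : ℝ), ∀ f : X → X, (∀ x ∈ K, dist (f x) x < ε) → f '' K ⊆ U := by
  obtain ⟨δ, hδ, hδU⟩ := hK.exists_thickening_subset_open hU hKU
  filter_upwards [Ioo_mem_nhdsGT hδ] with ε hε f hf
  rintro _ ⟨x, hx, rfl⟩
  exact hδU (mem_thickening_iff.2 ⟨x, hx, (hf x hx).trans hε.2⟩)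

theorem Set.InjOn.ncard_setOf_exists_eq_image {α β ι : Type*} {f : α → β} {θ : ι → Set α}
    (hf : InjOn f (⋃ i, θ i)) :
    {A | ∃ i, A = f '' θ i}.ncard = {A | ∃ i, A = θ i}.ncard := by
  have himage : {A | ∃ i, A = f '' θ i} = Set.image f '' {A | ∃ i, A = θ i} := by
    ext A
    simp [eq_comm]
  rw [himage, InjOn.ncard_image]
  rintro _ ⟨i, rfl⟩ _ ⟨j, rfl⟩ h
  exact (hf.image_eq_image_iff (subset_iUnion θ i) (subset_iUnion θ j)).1 h

theorem UnlinkedIn.image_homeomorph {A B : Set Circle1} (h : UnlinkedIn A B)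
    (e : Circle1 ≃ₜ Circle1) : UnlinkedIn (e '' A) (e '' B) := by
  obtain ⟨x, hxB, hB⟩ := h
  refine ⟨e x, mem_image_of_mem e hxB, ?_⟩
  rw [← e.image_compl, ← e.image_connectedComponentIn (connectedComponentIn_subset _ _ (hB hxB))]
  exact image_mono hB

theorem UnlinkedIn.eventually_translate {A B : Set Circle1} (hA : IsClosed A) (hB : IsCompact B)
    (h : UnlinkedIn A B) :
    ∀ᶠ ε in 𝓝[>] (0 : ℝ), ∀ u v : Circle1, ‖u‖ < ε → ‖v‖ < ε →
      UnlinkedIn ((· + u) '' A) ((· + v) '' B) := by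
  obtain ⟨x, hxB, hBC⟩ := h
  obtain ⟨δ, hδ, hδC⟩ := hB.exists_thickening_subset_open
    hA.isOpen_compl.connectedComponentIn hBC
  filter_upwards [Ioo_mem_nhdsGT (half_pos hδ)] with ε hε u v hu hv
  have hshift : ∀ b ∈ B, b + (v - u) ∈ connectedComponentIn Aᶜ x := fun b hb =>
    hδC (mem_thickening_iff.2 ⟨b, hb, by
      rw [dist_self_add_left]; linarith [norm_sub_le v u, hε.2]⟩)
  have hrel : UnlinkedIn A ((· + (v - u)) '' B) := by
    refine ⟨x + (v - u), mem_image_of_mem _ hxB, ?_⟩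
    rw [← connectedComponentIn_eq (hshift x hxB)]
    rintro _ ⟨b, hb, rfl⟩
    exact hshift b hb
  have himage : (· + v) '' B = Homeomorph.addRight u '' ((· + (v - u)) '' B) := by
    rw [image_image]
    exact image_congr fun b _ => by
      show b + v = b + (v - u) + u
      rw [add_assoc, sub_add_cancel]
  rw [himage]
  exact hrel.image_homeomorph _

theorem CbSet.eventually_image_mem {d : ℕ} {θ : CbAmb d} (hθ : θ ∈ CbSet d) :
    ∀ᶠ ε in 𝓝[>] (0 : ℝ), ∀ f : Circle1 → Circle1, (∀ x, dist (f x) x < ε) →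
      (∀ i, ∀ x ∈ θ i, ∀ y ∈ θ i, f x - x = f y - y) →
      (fun i => f '' θ i : CbAmb d) ∈ CbSet d := by
  obtain ⟨hne, hfin, hmul, hdisj, hcard, hunl⟩ := hθ
  have hunlε : ∀ᶠ ε in 𝓝[>] (0 : ℝ), ∀ i j, Disjoint (θ i) (θ j) → ∀ u v : Circle1,
      ‖u‖ < ε → ‖v‖ < ε → UnlinkedIn ((· + u) '' θ i) ((· + v) '' θ j) := by
    simp only [eventually_all]
    exact fun i j h => (hunl i j h).eventually_translate (hfin i).isClosed (hfin j).isCompact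
  filter_upwards [(finite_iUnion hfin).eventually_forall_injOn, hunlε] with ε hinjε hunlε f hf hcls
  have hinj : InjOn f (⋃ i, θ i) := hinjε f fun x _ => hf x
  have htranslate : ∀ i, ∃ u, ‖u‖ < ε ∧ f '' θ i = (· + u) '' θ i := fun i => by
    obtain ⟨a, ha⟩ := hne i
    refine ⟨f a - a, by rw [← dist_eq_norm]; exact hf a, image_congr fun x hx => ?_⟩
    rw [← hcls i x hx a ha, add_sub_cancel]
  refine ⟨fun i => (hne i).image f, fun i => (hfin i).image f, ?_, fun i j => ?_, ?_,
    fun i j h => ?_⟩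
  · rintro i _ ⟨x, hx, rfl⟩ _ ⟨y, hy, rfl⟩
    rw [← sub_add_cancel (f x) x, ← sub_add_cancel (f y) y, hcls i x hx y hy, smul_add, smul_add,
      hmul i x hx y hy]
  · exact (hdisj i j).imp (congrArg _) fun h =>
      h.image hinj (subset_iUnion θ i) (subset_iUnion θ j)
  · beta_reduce
    rw [← image_iUnion (f := f) (s := (θ : Fin (d - 1) → Set Circle1)), hinj.ncard_image,
      hinj.ncard_setOf_exists_eq_image]
    exact hcard
  · obtain ⟨u, hu, hi⟩ := htranslate i
    obtain ⟨v, hv, hj⟩ := htranslate j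
    simp only [hi, hj]
    exact hunlε i j h.of_image u v hu hv

/-- Misiurewicz combinatorics are dense in `Cb`. -/
theorem CbMis_dense (d : ℕ) (hd : 2 ≤ d) : CbSet d ⊆ closure (CbMis d) := by
  intro θ hθ
  obtain ⟨-, hfin, hmul, -⟩ := id hθ
  refine (CbAmb.isTopologicalBasis d).mem_closure_iff.2 ?_
  rintro _ ⟨O, hO, rfl⟩ hθO
  have hsubO : ∀ᶠ ε in 𝓝[>] (0 : ℝ), ∀ i, ∀ f : Circle1 → Circle1,
      (∀ x, dist (f x) x < ε) → f '' θ i ⊆ O i :=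
    eventually_all.2 fun i => ((hfin i).isCompact.eventually_forall_image_subset (hO i)
      (hθO i)).mono fun _ h f hf => h f fun x _ => hf x
  obtain ⟨ε, ⟨hmem, hsub⟩, hε⟩ :=
    ((CbSet.eventually_image_mem hθ).and hsubO |>.and self_mem_nhdsWithin).exists
  choose τ hτ using fun c => exists_norm_lt_forall_strictlyPreperiodic (by omega : 1 < d) c hε
  let f : Circle1 → Circle1 := fun x => x + τ (d • x)
  have hf : ∀ x, dist (f x) x < ε := fun x => by
    rw [dist_self_add_left]
    exact (hτ _).1
  have hcls : ∀ i, ∀ x ∈ θ i, ∀ y ∈ θ i, f x - x = f y - y := fun i x hx y hy => by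
    simp only [f, add_sub_cancel_left, hmul i x hx y hy]
  refine ⟨fun i => f '' θ i, fun i => hsub i f hf, hmem f hf hcls, ?_⟩
  rintro i _ ⟨x, -, rfl⟩
  exact (hτ (d • x)).2 x rfl
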